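/- arXiv:1902.01363 — 16 statements merged into one kernel-verified Lean document; each statement's English description precedes it below -/
import Mathlib

section
/- Let G be a group (written multiplicatively) and W a nonempty subset of G. Then the following statements are equivalent: (1) W admits a minimal complement in G; (2) for every subgroup H of G containing W, W admits a minimal complement in H; (3) for some subgroup H of G containing W, W admits a minimal complement in H. -/
open Pointwise

/-- For a nonempty subset `W` of a group `G`, the following are equivalent:
(1) `W` admits a minimal complement in `G`;
(2) `W` admits a minimal complement in every subgroup `H` of `G` containing `W`;
(3) `W` admits a minimal complement in some subgroup `H` of `G` containing `W`. -/
theorem minimal_complement_in_subgroup_tfae {G : Type*} [Group G]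
    (W : Set G) (hW : W.Nonempty) :
    List.TFAE
      [ ∃ M : Set G, W * M = Set.univ ∧ ∀ m ∈ M, W * (M \ {m}) ≠ Set.univ,
        ∀ H : Subgroup G, W ⊆ (H : Set G) →
          ∃ M : Set G, M ⊆ (H : Set G) ∧ W * M = (H : Set G) ∧
            ∀ m ∈ M, W * (M \ {m}) ≠ (H : Set G),
        ∃ H : Subgroup G, W ⊆ (H : Set G) ∧
          ∃ M : Set G, M ⊆ (H : Set G) ∧ W * M = (H : Set G) ∧
            ∀ m ∈ M, W * (M \ {m}) ≠ (H : Set G) ] := by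
  tfae_have 1 → 2 := by
    rintro ⟨M, hM, hmin⟩ H hWH
    refine ⟨M ∩ (H : Set G), Set.inter_subset_right, ?_, ?_⟩
    · apply Set.Subset.antisymm
      · rintro x ⟨w, hw, m, ⟨-, hmH⟩, rfl⟩
        exact H.mul_mem (hWH hw) hmH
      · intro x hx
        have : x ∈ W * M := by rw [hM]; trivial
        obtain ⟨w, hw, m, hm, rfl⟩ := this
        exact ⟨w, hw, m, ⟨hm, by
          have : m = w⁻¹ * (w * m) := by group
          rw [this]; exact H.mul_mem (H.inv_mem (hWH hw)) hx⟩, rfl⟩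
    · rintro m ⟨hmM, hmH⟩ heq
      apply hmin m hmM
      apply Set.eq_univ_of_forall
      intro g
      have : g ∈ W * M := by rw [hM]; trivial
      obtain ⟨w, hw, m', hm', rfl⟩ := this
      by_cases hmm : m' = m
      · subst hmm
        have hin : w * m' ∈ (H : Set G) := H.mul_mem (hWH hw) hmH
        rw [← heq] at hin
        obtain ⟨w', hw', m'', ⟨⟨hm''M, -⟩, hm''ne⟩, hEq⟩ := hin
        exact ⟨w', hw', m'', ⟨hm''M, hm''ne⟩, hEq⟩
      · exact ⟨w, hw, m', ⟨hm', hmm⟩, rfl⟩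
  tfae_have 2 → 3 := by
    intro h
    exact ⟨⊤, fun x _ => trivial, h ⊤ fun x _ => trivial⟩
  tfae_have 3 → 1 := by
    rintro ⟨H, hWH, M, hMH, hM, hmin⟩
    set T : Set G := Set.range (Quotient.out : Quotient (QuotientGroup.rightRel H) → G)
      with hT
    have hmemT : ∀ g : G, (Quotient.mk (QuotientGroup.rightRel H) g).out ∈ T :=
      fun g => ⟨_, rfl⟩
    have hcoset : ∀ g : G, g * ((Quotient.mk (QuotientGroup.rightRel H) g).out)⁻¹ ∈ H := by
      intro g
      have h1 : Quotient.mk (QuotientGroup.rightRel H)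
          ((Quotient.mk (QuotientGroup.rightRel H) g).out) =
          Quotient.mk (QuotientGroup.rightRel H) g := Quotient.out_eq _
      have h2 := Quotient.exact h1
      exact QuotientGroup.rightRel_apply.mp h2
    refine ⟨M * T, ?_, ?_⟩
    · apply Set.eq_univ_of_forall
      intro g
      set t := (Quotient.mk (QuotientGroup.rightRel H) g).out with ht
      have hgt : g * t⁻¹ ∈ (H : Set G) := hcoset g
      rw [← hM] at hgt
      obtain ⟨w, hw, m, hm, hwm⟩ := hgt
      have hwm' : w * m = g * t⁻¹ := hwm
      exact ⟨w, hw, m * t, ⟨m, hm, t, hmemT g, rfl⟩, by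
        show w * (m * t) = g
        rw [← mul_assoc, hwm']; group⟩
    · rintro x ⟨m, hm, t, ⟨q, rfl⟩, rfl⟩ heq
      apply hmin m hm
      apply Set.Subset.antisymm
      · rintro y ⟨w, hw, m', ⟨hm', -⟩, rfl⟩
        exact H.mul_mem (hWH hw) (hMH hm')
      · intro h hh
        have : h * q.out ∈ W * ((M * T) \ {m * q.out}) := by rw [heq]; trivial
        obtain ⟨w, hw, y, ⟨⟨m', hm', t', ⟨q', rfl⟩, rfl⟩, hyne⟩, hEq⟩ := this
        -- show q' = q
        have hEq' : w * (m' * q'.out) = h * q.out := hEq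
        have hrel : (QuotientGroup.rightRel H) q.out q'.out := by
          rw [QuotientGroup.rightRel_apply]
          have h2 : q'.out = (w * m')⁻¹ * (h * q.out) := by rw [← hEq']; group
          have h3 : q'.out * q.out⁻¹ = (w * m')⁻¹ * h := by rw [h2]; group
          rw [h3]
          exact H.mul_mem (H.inv_mem (H.mul_mem (hWH hw) (hMH hm'))) hh
        have hq : q = q' := by
          have := Quotient.sound hrel
          rwa [q.out_eq, q'.out_eq] at this
        subst hq
        have hm'eq : w * m' = h := by
          have h4 : (w * m') * q.out = h * q.out := by rw [mul_assoc]; exact hEq'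
          exact mul_right_cancel h4
        have hne : m' ≠ m := fun hc => hyne (by rw [hc]; exact rfl)
        exact ⟨w, hw, m', ⟨hm', hne⟩, hm'eq⟩
  tfae_finish
end

section
/- Let W := ℤ² \ {(0,n) : n ∈ ℕ}. Then: (i) for any two points (a,b), (c,d) ∈ ℤ² with a ≠ c, the two-element set {(a,b),(c,d)} is a minimal complement to W in ℤ²; (ii) every infinite subset C of {(0,n) : n ∈ ℕ} is a complement to W in ℤ², and no such infinite subset C is a minimal complement to W in ℤ². -/
open Pointwise

/-- `M` is an additive complement of `W` in the ambient abelian group. -/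
def IsComplement' {G : Type*} [AddCommGroup G] (W M : Set G) : Prop :=
  W + M = Set.univ

/-- `M` is a minimal additive complement of `W` in the ambient abelian group. -/
def IsMinimalComplement {G : Type*} [AddCommGroup G] (W M : Set G) : Prop :=
  W + M = Set.univ ∧ ∀ m ∈ M, W + (M \ {m}) ≠ Set.univ

/-- Auxiliary: any infinite subset of the ray is a complement to `W`. -/
theorem compl_aux (C : Set (ℤ × ℤ)) (hsub : C ⊆ {p : ℤ × ℤ | p.1 = 0 ∧ 0 ≤ p.2})
    (hC : C.Infinite) :
    ((Set.univ : Set (ℤ × ℤ)) \ {p : ℤ × ℤ | p.1 = 0 ∧ 0 ≤ p.2}) + C = Set.univ := by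
  ext ⟨x, y⟩
  simp only [Set.mem_univ, iff_true]
  by_cases hx : x = 0
  · -- need m ∈ C with m.2 > y
    have hfin : (C ∩ {p : ℤ × ℤ | p.2 ≤ y}).Finite := by
      apply Set.Finite.subset (Set.finite_Icc ((0:ℤ), (0:ℤ)) ((0:ℤ), y))
      rintro p ⟨hpC, hpy⟩
      obtain ⟨h1, h2⟩ := hsub hpC
      simp only [Set.mem_setOf_eq] at hpy
      exact ⟨⟨le_of_eq h1.symm, h2⟩, ⟨le_of_eq h1, hpy⟩⟩
    obtain ⟨m, hm⟩ := (hC.diff hfin).nonempty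
    have hmC : m ∈ C := hm.1
    have hmy : y < m.2 := by
      by_contra h
      exact hm.2 ⟨hmC, not_lt.mp h⟩
    obtain ⟨h1, _⟩ := hsub hmC
    refine ⟨(x - m.1, y - m.2), ⟨trivial, ?_⟩, m, hmC, ?_⟩
    · simp only [Set.mem_setOf_eq]
      rintro ⟨-, h⟩
      omega
    · simp only [Prod.mk_add_mk, Prod.ext_iff]
      constructor <;> [skip; skip] <;> simp
  · obtain ⟨m, hmC⟩ := hC.nonempty
    obtain ⟨h1, _⟩ := hsub hmC
    refine ⟨(x - m.1, y - m.2), ⟨trivial, ?_⟩, m, hmC, ?_⟩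
    · simp only [Set.mem_setOf_eq]
      rintro ⟨h, -⟩
      omega
    · simp only [Prod.mk_add_mk, Prod.ext_iff]
      constructor <;> [skip; skip] <;> simp

/-- For `W = ℤ² \ {(0,n) : n ∈ ℕ}`:
(i) any two points with distinct first coordinates form a minimal complement to `W`;
(ii) any infinite subset of `{(0,n) : n ∈ ℕ}` is a complement to `W`, but never a
minimal complement to `W`. -/
theorem lemma_YY :
    (∀ a b c d : ℤ, a ≠ c →
      IsMinimalComplement
        ((Set.univ : Set (ℤ × ℤ)) \ {p : ℤ × ℤ | p.1 = 0 ∧ 0 ≤ p.2})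
        ({(a, b), (c, d)} : Set (ℤ × ℤ))) ∧
    (∀ C : Set (ℤ × ℤ), C ⊆ {p : ℤ × ℤ | p.1 = 0 ∧ 0 ≤ p.2} → C.Infinite →
      IsComplement'
        ((Set.univ : Set (ℤ × ℤ)) \ {p : ℤ × ℤ | p.1 = 0 ∧ 0 ≤ p.2}) C ∧
      ¬ IsMinimalComplement
        ((Set.univ : Set (ℤ × ℤ)) \ {p : ℤ × ℤ | p.1 = 0 ∧ 0 ≤ p.2}) C) := by
  constructor
  · intro a b c d hac
    constructor
    · ext ⟨x, y⟩
      simp only [Set.mem_univ, iff_true]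
      by_cases h : x = a
      · refine ⟨(x - c, y - d), ⟨trivial, ?_⟩, (c, d), by simp, ?_⟩
        · simp only [Set.mem_setOf_eq]
          rintro ⟨h', -⟩
          omega
        · simp only [Prod.mk_add_mk, Prod.ext_iff]
          constructor <;> ring
      · refine ⟨(x - a, y - b), ⟨trivial, ?_⟩, (a, b), by simp, ?_⟩
        · simp only [Set.mem_setOf_eq]
          rintro ⟨h', -⟩
          omega
        · simp only [Prod.mk_add_mk, Prod.ext_iff]
          constructor <;> ring
    · intro m hm heq
      rcases hm with hm | hm
      · -- m = (a,b); then (c,d) is uncovered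
        have h : ((c, d) : ℤ × ℤ) ∈
            ((Set.univ : Set (ℤ × ℤ)) \ {p : ℤ × ℤ | p.1 = 0 ∧ 0 ≤ p.2}) +
              (({(a, b), (c, d)} : Set (ℤ × ℤ)) \ {m}) := by
          rw [heq]; trivial
        obtain ⟨w, hw, m', hm', hsum⟩ := h
        have hm'' : m' = (c, d) := by
          rcases hm'.1 with h' | h'
          · exact absurd (h'.trans hm.symm) hm'.2
          · exact h'
        subst hm''
        have hw0 : w = (0, 0) := by
          have := hsum
          simpa [Prod.ext_iff] using congrArg (fun p : ℤ × ℤ => (p.1 - c, p.2 - d)) this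
        rw [hw0] at hw
        exact hw.2 ⟨rfl, le_refl 0⟩
      · -- m = (c,d); then (a,b) is uncovered
        simp only [Set.mem_singleton_iff] at hm
        have h : ((a, b) : ℤ × ℤ) ∈
            ((Set.univ : Set (ℤ × ℤ)) \ {p : ℤ × ℤ | p.1 = 0 ∧ 0 ≤ p.2}) +
              (({(a, b), (c, d)} : Set (ℤ × ℤ)) \ {m}) := by
          rw [heq]; trivial
        obtain ⟨w, hw, m', hm', hsum⟩ := h
        have hm'' : m' = (a, b) := by
          rcases hm'.1 with h' | h'
          · exact h'
          · exact absurd (h'.trans hm.symm) hm'.2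
        subst hm''
        have hw0 : w = (0, 0) := by
          simpa [Prod.ext_iff] using congrArg (fun p : ℤ × ℤ => (p.1 - a, p.2 - b)) hsum
        rw [hw0] at hw
        exact hw.2 ⟨rfl, le_refl 0⟩
  · intro C hsub hC
    refine ⟨compl_aux C hsub hC, ?_⟩
    rintro ⟨-, hmin⟩
    obtain ⟨m, hmC⟩ := hC.nonempty
    exact hmin m hmC
      (compl_aux (C \ {m}) (fun p hp => hsub hp.1) (hC.diff (Set.finite_singleton m)))
end

section
/- Let A be a nonempty subset of ℤ and u: A → ℤ a function. Then the subset W := ⋃_{a∈A} {a} × (-∞, u(a)) of ℤ² (where (-∞, u(a)) = {m ∈ ℤ : m < u(a)}) does not admit any minimal complement in ℤ². Similarly, the subset ⋃_{a∈A} {a} × (u(a), ∞) of ℤ² (where (u(a), ∞) = {m ∈ ℤ : m > u(a)}) does not admit any minimal complement in ℤ². -/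
open Pointwise

lemma aux_down (W : Set (ℤ × ℤ))
    (hdc : ∀ p ∈ W, ∀ k : ℤ, 0 ≤ k → (p.1, p.2 - k) ∈ W)
    (hbd : ∀ c : ℤ, ∃ B : ℤ, ∀ y : ℤ, (c, y) ∈ W → y < B) :
    ¬ ∃ M : Set (ℤ × ℤ), IsMinimalComplement W M := by
  rintro ⟨M, hM, hmin⟩
  have h0 : ((0 : ℤ), (0 : ℤ)) ∈ W + M := by rw [hM]; trivial
  obtain ⟨w0, hw0, m, hm, -⟩ := Set.mem_add.mp h0
  apply hmin m hm
  rw [Set.eq_univ_iff_forall]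
  intro p
  obtain ⟨B, hB⟩ := hbd (p.1 - m.1)
  set N : ℤ := max 0 (B - (p.2 - m.2)) with hNdef
  have hN0 : 0 ≤ N := le_max_left _ _
  have hq : (p.1, p.2 + N) ∈ W + M := by rw [hM]; trivial
  obtain ⟨w, hw, m', hm', heq⟩ := Set.mem_add.mp hq
  have h1 : w.1 + m'.1 = p.1 := congrArg Prod.fst heq
  have h2 : w.2 + m'.2 = p.2 + N := congrArg Prod.snd heq
  by_cases hmm : m' = m
  · exfalso
    subst hmm
    have hw' : (p.1 - m'.1, p.2 + N - m'.2) ∈ W := by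
      have : w = (p.1 - m'.1, p.2 + N - m'.2) := by
        apply Prod.ext <;> simp <;> omega
      rwa [this] at hw
    have := hB (p.2 + N - m'.2) hw'
    have : B ≤ p.2 + N - m'.2 := by
      have := le_max_right 0 (B - (p.2 - m'.2))
      omega
    omega
  · refine Set.mem_add.mpr ⟨(w.1, w.2 - N), hdc w hw N hN0, m', ⟨hm', hmm⟩, ?_⟩
    apply Prod.ext <;> simp <;> omega

lemma aux_up (W : Set (ℤ × ℤ))
    (hdc : ∀ p ∈ W, ∀ k : ℤ, 0 ≤ k → (p.1, p.2 + k) ∈ W)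
    (hbd : ∀ c : ℤ, ∃ B : ℤ, ∀ y : ℤ, (c, y) ∈ W → B < y) :
    ¬ ∃ M : Set (ℤ × ℤ), IsMinimalComplement W M := by
  rintro ⟨M, hM, hmin⟩
  have h0 : ((0 : ℤ), (0 : ℤ)) ∈ W + M := by rw [hM]; trivial
  obtain ⟨w0, hw0, m, hm, -⟩ := Set.mem_add.mp h0
  apply hmin m hm
  rw [Set.eq_univ_iff_forall]
  intro p
  obtain ⟨B, hB⟩ := hbd (p.1 - m.1)
  set N : ℤ := max 0 ((p.2 - m.2) - B) with hNdef
  have hN0 : 0 ≤ N := le_max_left _ _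
  have hq : (p.1, p.2 - N) ∈ W + M := by rw [hM]; trivial
  obtain ⟨w, hw, m', hm', heq⟩ := Set.mem_add.mp hq
  have h1 : w.1 + m'.1 = p.1 := congrArg Prod.fst heq
  have h2 : w.2 + m'.2 = p.2 - N := congrArg Prod.snd heq
  by_cases hmm : m' = m
  · exfalso
    subst hmm
    have hw' : (p.1 - m'.1, p.2 - N - m'.2) ∈ W := by
      have : w = (p.1 - m'.1, p.2 - N - m'.2) := by
        apply Prod.ext <;> simp <;> omega
      rwa [this] at hw
    have := hB (p.2 - N - m'.2) hw'
    have : p.2 - N - m'.2 ≤ B := by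
      have := le_max_right 0 ((p.2 - m'.2) - B)
      omega
    omega
  · refine Set.mem_add.mpr ⟨(w.1, w.2 + N), hdc w hw N hN0, m', ⟨hm', hmm⟩, ?_⟩
    apply Prod.ext <;> simp <;> omega

/-- For a nonempty `A ⊆ ℤ` and `u : A → ℤ`, neither the union of the
downward-truncated lines `{a} × (-∞, u(a))` nor the union of the upward-truncated lines
`{a} × (u(a), ∞)` admits a minimal complement in `ℤ²`. -/
theorem truncated_lines_no_minimal_complement
    (A : Set ℤ) (hA : A.Nonempty) (u : A → ℤ) :
    (¬ ∃ M : Set (ℤ × ℤ), IsMinimalComplement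
        {p : ℤ × ℤ | ∃ a : A, p.1 = (a : ℤ) ∧ p.2 < u a} M) ∧
    (¬ ∃ M : Set (ℤ × ℤ), IsMinimalComplement
        {p : ℤ × ℤ | ∃ a : A, p.1 = (a : ℤ) ∧ p.2 > u a} M) := by
  constructor
  · apply aux_down
    · rintro p ⟨a, ha1, ha2⟩ k hk
      exact ⟨a, ha1, by simp; omega⟩
    · intro c
      by_cases hc : c ∈ A
      · refine ⟨u ⟨c, hc⟩, ?_⟩
        rintro y ⟨a, ha1, ha2⟩
        have : a = ⟨c, hc⟩ := Subtype.ext ha1.symm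
        rwa [this] at ha2
      · refine ⟨0, ?_⟩
        rintro y ⟨a, ha1, -⟩
        exact absurd (show c ∈ A by rw [show c = (a:ℤ) from ha1]; exact a.2) hc
  · apply aux_up
    · rintro p ⟨a, ha1, ha2⟩ k hk
      exact ⟨a, ha1, by simp; omega⟩
    · intro c
      by_cases hc : c ∈ A
      · refine ⟨u ⟨c, hc⟩, ?_⟩
        rintro y ⟨a, ha1, ha2⟩
        have : a = ⟨c, hc⟩ := Subtype.ext ha1.symm
        rwa [this] at ha2
      · refine ⟨0, ?_⟩
        rintro y ⟨a, ha1, -⟩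
        exact absurd (show c ∈ A by rw [show c = (a:ℤ) from ha1]; exact a.2) hc
end

section
/- Let f: ℤ → ℝ be a function, and set W₊ := {(x,y) ∈ ℤ² : (y : ℝ) > f(x)} and W₋ := {(x,y) ∈ ℤ² : (y : ℝ) < f(x)}. Then neither W₊ nor W₋ admits a minimal complement in ℤ². -/
open Pointwise

lemma no_min_compl_aux {W : Set (ℤ × ℤ)} (d : ℤ × ℤ)
    (hup : ∀ w ∈ W, ∀ n : ℕ, w + n • d ∈ W)
    (hdown : ∀ p : ℤ × ℤ, ∃ n : ℕ, p - n • d ∉ W) :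
    ¬ ∃ M : Set (ℤ × ℤ), IsMinimalComplement W M := by
  rintro ⟨M, h1, h2⟩
  have hMne : M.Nonempty := by
    rcases Set.eq_empty_or_nonempty M with h | h
    · rw [h, Set.add_empty] at h1
      exact absurd h1 (by simp [Set.eq_univ_iff_forall])
    · exact h
  obtain ⟨m, hm⟩ := hMne
  refine h2 m hm ?_
  apply Set.eq_univ_iff_forall.mpr
  intro g
  obtain ⟨n, hn⟩ := hdown (g - m)
  have hg : g - n • d ∈ W + M := by rw [h1]; trivial
  obtain ⟨w, hw, m', hm', hwm⟩ := Set.mem_add.mp hg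
  have hm'ne : m' ≠ m := by
    rintro rfl
    apply hn
    have hw2 : w = g - n • d - m' := eq_sub_of_add_eq hwm
    have he : g - m' - n • d = g - n • d - m' := by abel
    rw [he, ← hw2]
    exact hw
  refine Set.mem_add.mpr ⟨w + n • d, hup w hw n, m', ⟨hm', hm'ne⟩, ?_⟩
  have : w + n • d + m' = (w + m') + n • d := by abel
  rw [this, hwm]
  abel

/-- For any `f : ℤ → ℝ`, neither the set of integer points strictly above
the graph of `f` nor the set of integer points strictly below it admits a minimal
complement in `ℤ²`. -/
theorem above_below_graph_no_minimal_complement (f : ℤ → ℝ) :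
    (¬ ∃ M : Set (ℤ × ℤ), IsMinimalComplement
        {p : ℤ × ℤ | (p.2 : ℝ) > f p.1} M) ∧
    (¬ ∃ M : Set (ℤ × ℤ), IsMinimalComplement
        {p : ℤ × ℤ | (p.2 : ℝ) < f p.1} M) := by
  constructor
  · apply no_min_compl_aux ((0:ℤ), (1:ℤ))
    · intro w hw n
      simp only [Set.mem_setOf_eq] at *
      have h0 : (w + n • ((0:ℤ),(1:ℤ))).1 = w.1 := by simp
      have h1 : (w + n • ((0:ℤ),(1:ℤ))).2 = w.2 + n := by
        simp [Prod.smul_mk, nsmul_eq_mul]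
      rw [h0, h1]
      push_cast
      linarith [Nat.cast_nonneg (α := ℝ) n]
    · intro p
      set n : ℕ := (⌈(p.2 : ℝ) - f p.1⌉).toNat with hndef
      refine ⟨n, ?_⟩
      have h0 : (p - n • ((0:ℤ),(1:ℤ))).1 = p.1 := by simp
      have h1 : (p - n • ((0:ℤ),(1:ℤ))).2 = p.2 - n := by
        simp [Prod.smul_mk, nsmul_eq_mul]
      simp only [Set.mem_setOf_eq, h0, h1, not_lt]
      have hge : ((n : ℤ) : ℝ) ≥ (p.2 : ℝ) - f p.1 := by
        rw [hndef]
        calc (((⌈(p.2 : ℝ) - f p.1⌉).toNat : ℤ) : ℝ) ≥ ((⌈(p.2 : ℝ) - f p.1⌉ : ℤ) : ℝ) := by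
              exact_mod_cast Int.self_le_toNat _
          _ ≥ (p.2 : ℝ) - f p.1 := Int.le_ceil _
      push_cast at hge ⊢
      linarith
  · apply no_min_compl_aux ((0:ℤ), (-1:ℤ))
    · intro w hw n
      simp only [Set.mem_setOf_eq] at *
      have h0 : (w + n • ((0:ℤ),(-1:ℤ))).1 = w.1 := by simp
      have h1 : (w + n • ((0:ℤ),(-1:ℤ))).2 = w.2 - n := by
        simp [Prod.smul_mk, nsmul_eq_mul]; ring
      rw [h0, h1]
      push_cast
      linarith [Nat.cast_nonneg (α := ℝ) n]
    · intro p
      set n : ℕ := (⌈f p.1 - (p.2 : ℝ)⌉).toNat with hndef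
      refine ⟨n, ?_⟩
      have h0 : (p - n • ((0:ℤ),(-1:ℤ))).1 = p.1 := by simp
      have h1 : (p - n • ((0:ℤ),(-1:ℤ))).2 = p.2 + n := by
        simp [Prod.smul_mk, nsmul_eq_mul]
      simp only [Set.mem_setOf_eq, h0, h1, not_lt]
      have hge : ((n : ℤ) : ℝ) ≥ f p.1 - (p.2 : ℝ) := by
        rw [hndef]
        calc (((⌈f p.1 - (p.2 : ℝ)⌉).toNat : ℤ) : ℝ) ≥ ((⌈f p.1 - (p.2 : ℝ)⌉ : ℤ) : ℝ) := by
              exact_mod_cast Int.self_le_toNat _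
          _ ≥ f p.1 - (p.2 : ℝ) := Int.le_ceil _
      push_cast at hge ⊢
      linarith
end

section
/- Let G₁ be an abelian group and G₂ a free abelian group of finite positive rank r, with an isomorphism φ: G₂ ≅ ℤ^r. Let A be a nonempty subset of G₁ and u: G₁ → G₂ a function. Then neither of the subsets ⋃_{a∈A} {a} × φ⁻¹(ℤ^r_{<φ(u(a))}) and ⋃_{a∈A} {a} × φ⁻¹(ℤ^r_{>φ(u(a))}) of G₁ × G₂ admits a minimal complement in G₁ × G₂. -/
open Pointwise

/-- If for every point `q` there is a shift `e` with `q + e ∉ W` while `W - e ⊆ W`,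
then `W` has no minimal complement. -/
lemma no_min_of_shift {G : Type*} [AddCommGroup G] (W : Set G)
    (hW : ∀ q : G, ∃ e : G, q + e ∉ W ∧ ∀ w ∈ W, w - e ∈ W) :
    ¬ ∃ M : Set G, IsMinimalComplement W M := by
  rintro ⟨M, hcov, hmin⟩
  have h0 : (0 : G) ∈ W + M := by rw [hcov]; trivial
  obtain ⟨w0, hw0, m, hm, -⟩ := Set.mem_add.mp h0
  apply hmin m hm
  apply Set.eq_univ_iff_forall.mpr
  intro x
  obtain ⟨e, he1, he2⟩ := hW (x - m)
  have hx : x + e ∈ W + M := by rw [hcov]; trivial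
  obtain ⟨w, hw, m', hm', hsum⟩ := Set.mem_add.mp hx
  have hne : m' ≠ m := by
    rintro rfl
    apply he1
    have : w = x - m' + e := by linear_combination (norm := abel) hsum
    rwa [this] at hw
  refine Set.mem_add.mpr ⟨w - e, he2 w hw, m', ⟨hm', hne⟩, ?_⟩
  linear_combination (norm := abel) hsum

/-- Let `G₁` be abelian, `G₂` free abelian of rank `r > 0` with an isomorphism
`φ : G₂ ≃ ℤ^r`, `A ⊆ G₁` nonempty, `u : G₁ → G₂`. Then neither
`⋃_{a ∈ A} {a} × φ⁻¹(ℤ^r_{<φ(u(a))})` nor `⋃_{a ∈ A} {a} × φ⁻¹(ℤ^r_{>φ(u(a))})`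
admits a minimal complement in `G₁ × G₂` (lexicographic order on `ℤ^r`). -/
theorem truncated_no_minimal_complement_general
    {G₁ G₂ : Type*} [AddCommGroup G₁] [AddCommGroup G₂]
    (r : ℕ) (hr : 0 < r) (φ : G₂ ≃+ (Fin r → ℤ))
    (A : Set G₁) (hA : A.Nonempty) (u : G₁ → G₂) :
    (¬ ∃ M : Set (G₁ × G₂), IsMinimalComplement
        {p : G₁ × G₂ | p.1 ∈ A ∧ toLex (φ p.2) < toLex (φ (u p.1))} M) ∧
    (¬ ∃ M : Set (G₁ × G₂), IsMinimalComplement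
        {p : G₁ × G₂ | p.1 ∈ A ∧ toLex (φ p.2) > toLex (φ (u p.1))} M) := by
  haveI : WellFoundedLT (Fin r) := inferInstance
  have hone : (0 : Lex (Fin r → ℤ)) < |(toLex (fun _ => (1 : ℤ)) : Lex (Fin r → ℤ))| := by
    refine abs_pos.mpr ?_
    intro h
    have h2 := congrFun (ofLex.injective.eq_iff.mpr h) ⟨0, hr⟩
    exact one_ne_zero h2
  set one : Lex (Fin r → ℤ) := |(toLex (fun _ => (1 : ℤ)) : Lex (Fin r → ℤ))| with hone_def
  have hadd : ∀ a b : G₂, toLex (φ (a + b)) = toLex (φ a) + toLex (φ b) := by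
    intro a b; rw [map_add]; rfl
  have hsub : ∀ a b : G₂, toLex (φ (a - b)) = toLex (φ a) - toLex (φ b) := by
    intro a b; rw [map_sub]; rfl
  have hφc : ∀ c : Lex (Fin r → ℤ), toLex (φ (φ.symm (ofLex c))) = c := by
    intro c; rw [φ.apply_symm_apply]; rfl
  constructor
  · apply no_min_of_shift
    rintro ⟨q₁, q₂⟩
    set d : Lex (Fin r → ℤ) := toLex (φ (u q₁)) - toLex (φ q₂) with hd
    set c : Lex (Fin r → ℤ) := max d 0 + one with hc
    have hc_pos : 0 < c := by
      have h0 : (0 : Lex (Fin r → ℤ)) ≤ max d 0 := le_max_right _ _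
      calc (0 : Lex (Fin r → ℤ)) < one := hone
        _ ≤ max d 0 + one := le_add_of_nonneg_left h0
    have hc_gt : d < c := by
      calc d ≤ max d 0 := le_max_left _ _
        _ < max d 0 + one := lt_add_of_pos_right _ hone
    refine ⟨(0, φ.symm (ofLex c)), ?_, ?_⟩
    · rintro ⟨-, hlt⟩
      simp only [Prod.fst_add, Prod.snd_add, add_zero, zero_add] at hlt
      rw [hadd, hφc] at hlt
      have hge : toLex (φ (u q₁)) < toLex (φ q₂) + c := by
        rw [hd] at hc_gt
        calc toLex (φ (u q₁)) = toLex (φ q₂) + (toLex (φ (u q₁)) - toLex (φ q₂)) := by abel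
          _ < toLex (φ q₂) + c := add_lt_add_right hc_gt _
      exact absurd hlt (not_lt.mpr hge.le)
    · rintro ⟨w₁, w₂⟩ ⟨hwA, hwlt⟩
      simp only [Set.mem_setOf_eq, Prod.fst_sub, Prod.snd_sub, sub_zero] at hwA hwlt ⊢
      refine ⟨hwA, ?_⟩
      rw [hsub, hφc]
      calc toLex (φ w₂) - c < toLex (φ w₂) := sub_lt_self _ hc_pos
        _ < toLex (φ (u w₁)) := hwlt
  · apply no_min_of_shift
    rintro ⟨q₁, q₂⟩
    set d : Lex (Fin r → ℤ) := toLex (φ (u q₁)) - toLex (φ q₂) with hd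
    set c : Lex (Fin r → ℤ) := min d 0 - one with hc
    have hc_neg : c < 0 := by
      calc c ≤ 0 - one := sub_le_sub_right (min_le_right _ _) _
        _ < 0 := by simpa using hone
    have hc_lt : c < d := by
      calc c ≤ d - one := sub_le_sub_right (min_le_left _ _) _
        _ < d := sub_lt_self _ hone
    refine ⟨(0, φ.symm (ofLex c)), ?_, ?_⟩
    · rintro ⟨-, hlt⟩
      simp only [Prod.fst_add, Prod.snd_add, add_zero, zero_add] at hlt
      rw [hadd, hφc] at hlt
      have hle : toLex (φ q₂) + c < toLex (φ (u q₁)) := by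
        rw [hd] at hc_lt
        calc toLex (φ q₂) + c < toLex (φ q₂) + (toLex (φ (u q₁)) - toLex (φ q₂)) :=
              add_lt_add_right hc_lt _
          _ = toLex (φ (u q₁)) := by abel
      exact absurd hlt (not_lt.mpr hle.le)
    · rintro ⟨w₁, w₂⟩ ⟨hwA, hwgt⟩
      simp only [Set.mem_setOf_eq, Prod.fst_sub, Prod.snd_sub, sub_zero] at hwA hwgt ⊢
      refine ⟨hwA, ?_⟩
      rw [hsub, hφc]
      calc toLex (φ (u w₁)) < toLex (φ w₂) := hwgt
        _ < toLex (φ w₂) - c := by simpa using sub_lt_sub_left hc_neg (toLex (φ w₂))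
end

section
/- Let W₊ := {(x,y) ∈ ℤ² : (x+y)/√2 > ((x−y)/√2)²} and W₋ := {(x,y) ∈ ℤ² : (x+y)/√2 < ((x−y)/√2)²} (the sets of integer points lying above, respectively below, the parabola Y = X² rotated clockwise by 45°). Then neither W₊ nor W₋ admits a minimal complement in ℤ². -/
open Pointwise

private lemma aux_up_s5 (s a b c : ℝ) (hs : 0 < s) (hc : 0 ≤ c)
    (h : (a + b) / s > ((a - b) / s) ^ 2) :
    (a + c + (b + c)) / s > ((a + c - (b + c)) / s) ^ 2 := by
  have h1 : a + c - (b + c) = a - b := by ring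
  have h2 : (a + c + (b + c)) / s = (a + b) / s + 2 * c / s := by ring
  have h3 : (0:ℝ) ≤ 2 * c / s := by positivity
  rw [h1, h2]
  linarith

private lemma aux_down_s5 (s a b c : ℝ) (hs : 0 < s) (hc : 0 ≤ c)
    (h : (a + b) / s < ((a - b) / s) ^ 2) :
    (a - c + (b - c)) / s < ((a - c - (b - c)) / s) ^ 2 := by
  have h1 : a - c - (b - c) = a - b := by ring
  have h2 : (a - c + (b - c)) / s = (a + b) / s - 2 * c / s := by ring
  have h3 : (0:ℝ) ≤ 2 * c / s := by positivity
  rw [h1, h2]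
  linarith

/-- Neither the set of integer points above, nor the set of integer points
below, the parabola `Y = X²` rotated clockwise by `45°` admits a minimal complement
in `ℤ²`. -/
theorem rotated_parabola_no_minimal_complement :
    (¬ ∃ M : Set (ℤ × ℤ), IsMinimalComplement
        {p : ℤ × ℤ | ((p.1 : ℝ) + p.2) / Real.sqrt 2 >
          (((p.1 : ℝ) - p.2) / Real.sqrt 2) ^ 2} M) ∧
    (¬ ∃ M : Set (ℤ × ℤ), IsMinimalComplement
        {p : ℤ × ℤ | ((p.1 : ℝ) + p.2) / Real.sqrt 2 <
          (((p.1 : ℝ) - p.2) / Real.sqrt 2) ^ 2} M) := by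
  have hs : (0:ℝ) < Real.sqrt 2 := by positivity
  have hs2 : Real.sqrt 2 ^ 2 = 2 := Real.sq_sqrt (by norm_num)
  have hslt : Real.sqrt 2 < 2 := by nlinarith
  constructor
  · rintro ⟨M, hM1, hM2⟩
    obtain ⟨w0, -, m, hm, -⟩ := Set.mem_add.mp (hM1 ▸ Set.mem_univ ((0, 0) : ℤ × ℤ))
    refine hM2 m hm (Set.eq_univ_of_forall fun g => ?_)
    obtain ⟨k, hk0, hkprop⟩ : ∃ k : ℤ, 0 ≤ k ∧ g.1 + g.2 - m.1 - m.2 - 2 * k ≤ 0 :=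
      ⟨|g.1 + g.2 - m.1 - m.2|, abs_nonneg _, by
        linarith [le_abs_self (g.1 + g.2 - m.1 - m.2), abs_nonneg (g.1 + g.2 - m.1 - m.2)]⟩
    obtain ⟨w, hw, m', hm', heq⟩ := Set.mem_add.mp (hM1 ▸ Set.mem_univ (g - (k, k)))
    simp only [Set.mem_setOf_eq] at hw
    have hfst : w.1 + m'.1 = g.1 - k := by
      have := congrArg Prod.fst heq; simpa using this
    have hsnd : w.2 + m'.2 = g.2 - k := by
      have := congrArg Prod.snd heq; simpa using this
    have hne : m' ≠ m := by
      intro h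
      rw [h] at hfst hsnd
      have hsumZ : w.1 + w.2 ≤ 0 := by linarith
      have hsumR : ((w.1 : ℝ) + w.2) ≤ 0 := by exact_mod_cast hsumZ
      have h1 : ((w.1 : ℝ) + w.2) / Real.sqrt 2 ≤ 0 :=
        div_nonpos_of_nonpos_of_nonneg hsumR hs.le
      linarith [hw, sq_nonneg (((w.1 : ℝ) - w.2) / Real.sqrt 2)]
    refine Set.mem_add.mpr ⟨w + (k, k), ?_, m', ⟨hm', hne⟩, ?_⟩
    · simp only [Set.mem_setOf_eq, Prod.fst_add, Prod.snd_add]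
      push_cast
      exact aux_up_s5 _ _ _ _ hs (by exact_mod_cast hk0) hw
    · rw [add_right_comm, heq]
      ring
  · rintro ⟨M, hM1, hM2⟩
    obtain ⟨w0, -, m, hm, -⟩ := Set.mem_add.mp (hM1 ▸ Set.mem_univ ((0, 0) : ℤ × ℤ))
    refine hM2 m hm (Set.eq_univ_of_forall fun g => ?_)
    obtain ⟨k, hk0, hkprop⟩ : ∃ k : ℤ, 0 ≤ k ∧
        (g.1 - g.2 - m.1 + m.2) ^ 2 ≤ g.1 + g.2 - m.1 - m.2 + 2 * k :=
      ⟨|g.1 + g.2 - m.1 - m.2| + (g.1 - g.2 - m.1 + m.2) ^ 2, by positivity, by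
        linarith [neg_abs_le (g.1 + g.2 - m.1 - m.2), abs_nonneg (g.1 + g.2 - m.1 - m.2),
          sq_nonneg (g.1 - g.2 - m.1 + m.2)]⟩
    obtain ⟨w, hw, m', hm', heq⟩ := Set.mem_add.mp (hM1 ▸ Set.mem_univ (g + (k, k)))
    simp only [Set.mem_setOf_eq] at hw
    have hfst : w.1 + m'.1 = g.1 + k := by
      have := congrArg Prod.fst heq; simpa using this
    have hsnd : w.2 + m'.2 = g.2 + k := by
      have := congrArg Prod.snd heq; simpa using this
    have hne : m' ≠ m := by
      intro h
      rw [h] at hfst hsnd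
      have hDZ : w.1 - w.2 = g.1 - g.2 - m.1 + m.2 := by linarith
      have hZ : (w.1 - w.2) ^ 2 ≤ w.1 + w.2 := by
        rw [hDZ]; linarith
      have hR : ((w.1 : ℝ) - w.2) ^ 2 ≤ (w.1 : ℝ) + w.2 := by exact_mod_cast hZ
      rw [div_pow, hs2] at hw
      have h2 : ((w.1 : ℝ) + w.2) < ((w.1 : ℝ) - w.2) ^ 2 / 2 * Real.sqrt 2 :=
        (div_lt_iff₀ hs).mp hw
      nlinarith [sq_nonneg ((w.1 : ℝ) - w.2)]
    refine Set.mem_add.mpr ⟨w - (k, k), ?_, m', ⟨hm', hne⟩, ?_⟩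
    · simp only [Set.mem_setOf_eq, Prod.fst_sub, Prod.snd_sub]
      push_cast
      exact aux_down_s5 _ _ _ _ hs (by exact_mod_cast hk0) hw
    · have : w - (k, k) + m' = w + m' - (k, k) := by ring
      rw [this, heq]
      ring
end

section
/- Let f: ℤ → ℝ be a function, and set W₊ := {(x,y) ∈ ℤ² : (x : ℝ) > f(y)} and W₋ := {(x,y) ∈ ℤ² : (x : ℝ) < f(y)}. Then neither W₊ nor W₋ admits a minimal complement in ℤ². -/
open Pointwise

lemma shift_iter {G : Type*} [AddCommGroup G] {W : Set G} {v : G}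
    (hshift : ∀ w ∈ W, w + v ∈ W) : ∀ w ∈ W, ∀ k : ℕ, w + k • v ∈ W := by
  intro w hw k
  induction k with
  | zero => simpa using hw
  | succ n ih =>
      have := hshift _ ih
      have h : w + (n + 1) • v = w + n • v + v := by
        rw [succ_nsmul]; abel
      rwa [h]

lemma no_min_compl {G : Type*} [AddCommGroup G] (W : Set G) (v : G)
    (hshift : ∀ w ∈ W, w + v ∈ W)
    (hray : ∀ p : G, ∃ k : ℕ, p - k • v ∉ W) :
    ¬ ∃ M : Set G, IsMinimalComplement W M := by
  rintro ⟨M, hM, hmin⟩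
  have h0 : (0 : G) ∈ W + M := by rw [hM]; trivial
  obtain ⟨w0, hw0, m, hm, -⟩ := h0
  apply hmin m hm
  ext p
  simp only [Set.mem_univ, iff_true]
  by_contra hp
  have key : ∀ k : ℕ, (p - m) - k • v ∈ W := by
    intro k
    have hpk : p - k • v ∈ W + M := by rw [hM]; trivial
    obtain ⟨w, hw, m', hm', hsum⟩ := hpk
    by_cases h : m' = m
    · have hweq : w = p - m - k • v := by
        have h1 : w = p - k • v - m' := eq_sub_of_add_eq hsum
        rw [h1, h]; abel
      rwa [hweq] at hw
    · exfalso
      apply hp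
      refine ⟨w + k • v, shift_iter hshift w hw k, m', ⟨hm', h⟩, ?_⟩
      show w + k • v + m' = p
      have h1 : w = p - k • v - m' := eq_sub_of_add_eq hsum
      rw [h1]; abel
  obtain ⟨k, hk⟩ := hray (p - m)
  exact hk (key k)

/-- For any `f : ℤ → ℝ`, neither the set of integer points strictly to the
right of the sideways graph `X = f(Y)` nor the set strictly to the left of it admits a
minimal complement in `ℤ²`. -/
theorem sideways_graph_no_minimal_complement (f : ℤ → ℝ) :
    (¬ ∃ M : Set (ℤ × ℤ), IsMinimalComplement
        {p : ℤ × ℤ | (p.1 : ℝ) > f p.2} M) ∧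
    (¬ ∃ M : Set (ℤ × ℤ), IsMinimalComplement
        {p : ℤ × ℤ | (p.1 : ℝ) < f p.2} M) := by
  constructor
  · apply no_min_compl _ ((1 : ℤ), (0 : ℤ))
    · intro w hw
      simp only [Set.mem_setOf_eq, Prod.fst_add, Prod.snd_add, add_zero] at hw ⊢
      push_cast
      linarith
    · intro p
      obtain ⟨k, hk⟩ := exists_nat_ge ((p.1 : ℝ) - f p.2)
      refine ⟨k, ?_⟩
      simp only [Set.mem_setOf_eq, Prod.smul_mk, smul_zero, nsmul_eq_mul, mul_one,
        Prod.fst_sub, Prod.snd_sub, sub_zero, not_lt]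
      push_cast
      linarith
  · apply no_min_compl _ ((-1 : ℤ), (0 : ℤ))
    · intro w hw
      simp only [Set.mem_setOf_eq, Prod.fst_add, Prod.snd_add, add_zero] at hw ⊢
      push_cast
      linarith
    · intro p
      obtain ⟨k, hk⟩ := exists_nat_ge (f p.2 - (p.1 : ℝ))
      refine ⟨k, ?_⟩
      simp only [Set.mem_setOf_eq, Prod.smul_mk, smul_zero, smul_neg, nsmul_eq_mul, mul_one,
        Prod.fst_sub, Prod.snd_sub, sub_zero, sub_neg_eq_add, not_lt]
      push_cast
      linarith
end

section
/- Let f: ℝ → ℝ be a function and θ ∈ ℝ an angle such that tan θ is rational (i.e., there are coprime integers a, b with b·sin θ = a·cos θ and (a,b) ≠ (0,0)). Set W₊ := {(x,y) ∈ ℤ² : x·sin θ + y·cos θ > f(x·cos θ − y·sin θ)} and W₋ := {(x,y) ∈ ℤ² : x·sin θ + y·cos θ < f(x·cos θ − y·sin θ)}. Then neither W₊ nor W₋ admits a minimal complement in ℤ². -/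
open Pointwise

private lemma key_no_min {G : Type*} [AddCommGroup G] (W : Set G) (g : G)
    (h1 : ∀ w ∈ W, w + g ∈ W)
    (h2 : ∀ x : G, ∃ n : ℕ, x - (n + 1) • g ∉ W) :
    ¬ ∃ M : Set G, IsMinimalComplement W M := by
  rintro ⟨M, hU, hmin⟩
  have hiter : ∀ (k : ℕ) (w : G), w ∈ W → w + k • g ∈ W := by
    intro k
    induction k with
    | zero => intro w hw; simpa using hw
    | succ k ih =>
      intro w hw
      have := h1 _ (ih w hw)
      rwa [succ_nsmul, ← add_assoc]
  have h0 : (0 : G) ∈ W + M := by rw [hU]; exact Set.mem_univ 0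
  obtain ⟨w0, hw0, m, hm, -⟩ := Set.mem_add.mp h0
  apply hmin m hm
  apply Set.eq_univ_iff_forall.mpr
  intro x
  obtain ⟨n, hn⟩ := h2 (x - m)
  have hx : x - (n + 1) • g ∈ W + M := by rw [hU]; exact Set.mem_univ _
  obtain ⟨w, hw, m', hm', heq⟩ := Set.mem_add.mp hx
  have hmm : m' ≠ m := by
    rintro rfl
    apply hn
    have hw' : w = x - m' - (n + 1) • g := by
      have := eq_sub_of_add_eq heq
      rw [this, sub_right_comm]
    rwa [hw'] at hw
  refine Set.mem_add.mpr ⟨w + (n + 1) • g, hiter (n + 1) w hw, m', ⟨hm', hmm⟩, ?_⟩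
  have := eq_sub_of_add_eq heq
  rw [this]; abel

private lemma aux_gt (f : ℝ → ℝ) (s t : ℝ) (a b : ℤ)
    (hc : 0 < (a : ℝ) * s + (b : ℝ) * t) (hX : (a : ℝ) * t - (b : ℝ) * s = 0) :
    ¬ ∃ M : Set (ℤ × ℤ), IsMinimalComplement
      {p : ℤ × ℤ | (p.1 : ℝ) * s + (p.2 : ℝ) * t > f ((p.1 : ℝ) * t - (p.2 : ℝ) * s)} M := by
  apply key_no_min _ ((a, b) : ℤ × ℤ)
  · intro p hp
    simp only [Set.mem_setOf_eq, Prod.fst_add, Prod.snd_add] at *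
    push_cast
    have harg : ((p.1 : ℝ) + a) * t - ((p.2 : ℝ) + b) * s = (p.1 : ℝ) * t - (p.2 : ℝ) * s := by
      linear_combination hX
    rw [harg]
    nlinarith [hp, hc]
  · intro x
    obtain ⟨n, hn⟩ := exists_nat_ge
      (((x.1 : ℝ) * s + (x.2 : ℝ) * t -
        f ((x.1 : ℝ) * t - (x.2 : ℝ) * s)) / ((a : ℝ) * s + (b : ℝ) * t))
    refine ⟨n, ?_⟩
    simp only [Set.mem_setOf_eq, Prod.fst_sub, Prod.snd_sub, Prod.smul_fst, Prod.smul_snd,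
      not_lt]
    simp only [nsmul_eq_mul]
    push_cast
    have harg : ((x.1 : ℝ) - ((n : ℝ) + 1) * a) * t - ((x.2 : ℝ) - ((n : ℝ) + 1) * b) * s
        = (x.1 : ℝ) * t - (x.2 : ℝ) * s := by linear_combination (-(n : ℝ) - 1) * hX
    rw [harg]
    have hd := (div_le_iff₀ hc).mp hn
    nlinarith [hd, hc]

private lemma aux_lt (f : ℝ → ℝ) (s t : ℝ) (a b : ℤ)
    (hc : (a : ℝ) * s + (b : ℝ) * t < 0) (hX : (a : ℝ) * t - (b : ℝ) * s = 0) :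
    ¬ ∃ M : Set (ℤ × ℤ), IsMinimalComplement
      {p : ℤ × ℤ | (p.1 : ℝ) * s + (p.2 : ℝ) * t < f ((p.1 : ℝ) * t - (p.2 : ℝ) * s)} M := by
  apply key_no_min _ ((a, b) : ℤ × ℤ)
  · intro p hp
    simp only [Set.mem_setOf_eq, Prod.fst_add, Prod.snd_add] at *
    push_cast
    have harg : ((p.1 : ℝ) + a) * t - ((p.2 : ℝ) + b) * s = (p.1 : ℝ) * t - (p.2 : ℝ) * s := by
      linear_combination hX
    rw [harg]
    nlinarith [hp, hc]
  · intro x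
    obtain ⟨n, hn⟩ := exists_nat_ge
      ((f ((x.1 : ℝ) * t - (x.2 : ℝ) * s) -
        ((x.1 : ℝ) * s + (x.2 : ℝ) * t)) / (-((a : ℝ) * s + (b : ℝ) * t)))
    refine ⟨n, ?_⟩
    simp only [Set.mem_setOf_eq, Prod.fst_sub, Prod.snd_sub, Prod.smul_fst, Prod.smul_snd,
      not_lt]
    simp only [nsmul_eq_mul]
    push_cast
    have harg : ((x.1 : ℝ) - ((n : ℝ) + 1) * a) * t - ((x.2 : ℝ) - ((n : ℝ) + 1) * b) * s
        = (x.1 : ℝ) * t - (x.2 : ℝ) * s := by linear_combination (-(n : ℝ) - 1) * hX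
    rw [harg]
    have hc' : 0 < -((a : ℝ) * s + (b : ℝ) * t) := by linarith
    have hd := (div_le_iff₀ hc').mp hn
    nlinarith [hd, hc']

/-- Let `f : ℝ → ℝ` and `θ` be an angle with rational tangent, i.e., there
are coprime integers `a, b`, not both zero, with `b·sin θ = a·cos θ`. Then neither the
set of integer points lying above the graph of `Y = f(X)` rotated clockwise by `θ`, nor
the set of points lying below it, admits a minimal complement in `ℤ²`. -/
theorem rotated_graph_no_minimal_complement
    (f : ℝ → ℝ) (θ : ℝ) (a b : ℤ) (hab : IsCoprime a b)
    (hθ : (b : ℝ) * Real.sin θ = (a : ℝ) * Real.cos θ)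
    (hne : ¬(a = 0 ∧ b = 0)) :
    (¬ ∃ M : Set (ℤ × ℤ), IsMinimalComplement
        {p : ℤ × ℤ | (p.1 : ℝ) * Real.sin θ + (p.2 : ℝ) * Real.cos θ >
          f ((p.1 : ℝ) * Real.cos θ - (p.2 : ℝ) * Real.sin θ)} M) ∧
    (¬ ∃ M : Set (ℤ × ℤ), IsMinimalComplement
        {p : ℤ × ℤ | (p.1 : ℝ) * Real.sin θ + (p.2 : ℝ) * Real.cos θ <
          f ((p.1 : ℝ) * Real.cos θ - (p.2 : ℝ) * Real.sin θ)} M) := by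
  set s := Real.sin θ with hs
  set t := Real.cos θ with ht
  have hpyth : s ^ 2 + t ^ 2 = 1 := Real.sin_sq_add_cos_sq θ
  set c : ℝ := (a : ℝ) * s + (b : ℝ) * t with hcdef
  have hcs : c * s = (a : ℝ) := by rw [hcdef]; linear_combination t * hθ + (a : ℝ) * hpyth
  have hct : c * t = (b : ℝ) := by rw [hcdef]; linear_combination (b : ℝ) * hpyth - s * hθ
  have hcne : c ≠ 0 := by
    intro h
    apply hne
    constructor
    · have : (a : ℝ) = 0 := by rw [← hcs, h, zero_mul]
      exact_mod_cast this
    · have : (b : ℝ) = 0 := by rw [← hct, h, zero_mul]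
      exact_mod_cast this
  have hX : (a : ℝ) * t - (b : ℝ) * s = 0 := by
    rw [← hcs, ← hct]; ring
  rcases lt_or_gt_of_ne hcne with hneg | hpos
  · constructor
    · apply aux_gt f s t (-a) (-b) <;> push_cast <;> linarith
    · apply aux_lt f s t a b <;> push_cast <;> linarith
  · constructor
    · apply aux_gt f s t a b <;> push_cast <;> linarith
    · apply aux_lt f s t (-a) (-b) <;> push_cast <;> linarith
end

section
/- Let n be a positive integer and f: ℤⁿ → ℝ a function. Set W₊ := {(x₁,…,xₙ,x_{n+1}) ∈ ℤ^{n+1} : (x_{n+1} : ℝ) > f(x₁,…,xₙ)} and W₋ := {(x₁,…,xₙ,x_{n+1}) ∈ ℤ^{n+1} : (x_{n+1} : ℝ) < f(x₁,…,xₙ)}. Then neither W₊ nor W₋ admits a minimal complement in ℤ^{n+1}. -/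
open Pointwise

lemma no_min_comp_aux {G : Type*} [AddCommGroup G] (W : Set G) (e : G)
    (hup : ∀ w ∈ W, w + e ∈ W)
    (hesc : ∀ q : G, ∃ N : ℕ, q - N • e ∉ W) :
    ¬ ∃ M : Set G, IsMinimalComplement W M := by
  rintro ⟨M, hWM, hmin⟩
  have hupk : ∀ w ∈ W, ∀ k : ℕ, w + k • e ∈ W := by
    intro w hw k
    induction k with
    | zero => simpa
    | succ k ih =>
        have := hup _ ih
        have heq : w + (k + 1) • e = w + k • e + e := by rw [succ_nsmul]; abel
        rwa [heq]
  have h0 : (0 : G) ∈ W + M := by rw [hWM]; trivial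
  rw [Set.mem_add] at h0
  obtain ⟨w0, hw0, m, hm, -⟩ := h0
  apply hmin m hm
  ext p
  simp only [Set.mem_univ, iff_true]
  obtain ⟨N, hN⟩ := hesc (p - m)
  have hp : p - N • e ∈ W + M := by rw [hWM]; trivial
  rw [Set.mem_add] at hp
  obtain ⟨w, hw, m', hm', hsum⟩ := hp
  have hne : m' ≠ m := by
    rintro rfl
    apply hN
    have heq : w = p - m' - N • e := by
      have := hsum; abel_nf; abel_nf at this; linear_combination (norm := abel) this
    rwa [heq] at hw
  rw [Set.mem_add]
  refine ⟨w + N • e, hupk w hw N, m', ⟨hm', hne⟩, ?_⟩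
  linear_combination (norm := abel) hsum

/-- For a positive integer `n` and `f : ℤⁿ → ℝ`, neither the set of points
of `ℤ^{n+1}` lying strictly above the graph of `f`, nor the set lying strictly below it,
admits a minimal complement in `ℤ^{n+1}`. -/
theorem graph_no_minimal_complement_higher_dim
    (n : ℕ) (hn : 0 < n) (f : (Fin n → ℤ) → ℝ) :
    (¬ ∃ M : Set ((Fin n → ℤ) × ℤ), IsMinimalComplement
        {p : (Fin n → ℤ) × ℤ | (p.2 : ℝ) > f p.1} M) ∧
    (¬ ∃ M : Set ((Fin n → ℤ) × ℤ), IsMinimalComplement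
        {p : (Fin n → ℤ) × ℤ | (p.2 : ℝ) < f p.1} M) := by
  constructor
  · apply no_min_comp_aux _ ((0, 1) : (Fin n → ℤ) × ℤ)
    · intro w hw
      simp only [Set.mem_setOf_eq, Prod.fst_add, Prod.snd_add, add_zero] at *
      push_cast
      linarith
    · intro q
      obtain ⟨N, hN⟩ := exists_nat_gt ((q.2 : ℝ) - f q.1)
      refine ⟨N, ?_⟩
      simp only [Set.mem_setOf_eq, Prod.fst_sub, Prod.snd_sub, Prod.smul_mk, smul_zero,
        nsmul_eq_mul, mul_one, sub_zero, not_lt]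
      push_cast
      linarith
  · apply no_min_comp_aux _ ((0, -1) : (Fin n → ℤ) × ℤ)
    · intro w hw
      simp only [Set.mem_setOf_eq, Prod.fst_add, Prod.snd_add, add_zero] at *
      push_cast
      linarith
    · intro q
      obtain ⟨N, hN⟩ := exists_nat_gt (f q.1 - (q.2 : ℝ))
      refine ⟨N, ?_⟩
      simp only [Set.mem_setOf_eq, Prod.fst_sub, Prod.snd_sub, Prod.smul_mk, smul_zero,
        nsmul_eq_mul, mul_neg_one, sub_neg_eq_add, sub_zero, not_lt]
      push_cast
      linarith
end

section
/- Let k be a positive integer, u: ℤ^k → ℤ a function, and v: ℤ^k → ℤ a moderation of u. Let ℬ be a subset of ℤ^k admitting a minimal complement M in ℤ^k. Then the set M_v := {(x, v(x)) : x ∈ M} ⊆ ℤ^{k+1} is a minimal complement in ℤ^{k+1} of every subset X of ℤ^{k+1} satisfying ℬ × ℤ ⊆ X ⊆ (ℬ × ℤ) ∪ ⋃_{x ∈ ℤ^k \ ℬ} ({x} × {m ∈ ℤ : m < u(x)}). -/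
open Pointwise

/-- `v` is a moderation of `u : ℤ^k → ℤ`: for each `x₀`, the function
`x ↦ u(x) + v(x₀ - x)` is bounded above. -/
def IsModeration {k : ℕ} (u v : (Fin k → ℤ) → ℤ) : Prop :=
  ∀ x₀ : Fin k → ℤ, ∃ m : ℤ, ∀ x : Fin k → ℤ, u x + v (x₀ - x) ≤ m

/-- If `v` is a moderation of `u : ℤ^k → ℤ` and `M` is a minimal complement
of `ℬ ⊆ ℤ^k`, then `M_v = {(x, v(x)) : x ∈ M}` is a minimal complement of every `X`
with `ℬ × ℤ ⊆ X ⊆ (ℬ × ℤ) ∪ ⋃_{x ∉ ℬ} {x} × (-∞, u(x))`. -/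
theorem graph_of_moderation_is_minimal_complement
    (k : ℕ) (hk : 0 < k) (u v : (Fin k → ℤ) → ℤ) (hv : IsModeration u v)
    (ℬ : Set (Fin k → ℤ)) (M : Set (Fin k → ℤ))
    (hM : IsMinimalComplement ℬ M)
    (X : Set ((Fin k → ℤ) × ℤ))
    (hX₁ : ℬ ×ˢ (Set.univ : Set ℤ) ⊆ X)
    (hX₂ : X ⊆ (ℬ ×ˢ (Set.univ : Set ℤ)) ∪
      {p : (Fin k → ℤ) × ℤ | p.1 ∉ ℬ ∧ p.2 < u p.1}) :
    IsMinimalComplement X {p : (Fin k → ℤ) × ℤ | ∃ x ∈ M, p = (x, v x)} := by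
  obtain ⟨hMc, hMmin⟩ := hM
  constructor
  · apply Set.eq_univ_of_forall
    rintro ⟨y, n⟩
    have hy : y ∈ ℬ + M := by rw [hMc]; trivial
    obtain ⟨b, hb, m, hm, hbm⟩ := hy
    rw [Set.mem_add]
    refine ⟨(b, n - v m), hX₁ ⟨hb, trivial⟩, (m, v m), ⟨m, hm, rfl⟩, ?_⟩
    have : b + m = y := hbm
    simp [Prod.ext_iff, this]
  · rintro p ⟨x₀, hx₀, rfl⟩ hcontra
    obtain ⟨y, hy⟩ := Set.ne_univ_iff_exists_notMem _ |>.mp (hMmin x₀ hx₀)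
    obtain ⟨C, hC⟩ := hv y
    have : (y, C) ∈ X + ({p : (Fin k → ℤ) × ℤ | ∃ x ∈ M, p = (x, v x)} \ {(x₀, v x₀)}) := by
      rw [hcontra]; trivial
    rw [Set.mem_add] at this
    obtain ⟨p, hp, q, ⟨⟨m, hm, rfl⟩, hq2⟩, heq⟩ := this
    have hp1 : p.1 = y - m := by
      have := congrArg Prod.fst heq
      simp at this
      linear_combination (norm := abel) this
    have hp2 : p.2 = C - v m := by
      have := congrArg Prod.snd heq
      simp at this
      omega
    have hmx : m ≠ x₀ := by
      rintro rfl
      exact hq2 rfl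
    have hnb : p.1 ∉ ℬ := by
      rw [hp1]
      intro hb
      exact hy ⟨y - m, hb, m, ⟨hm, hmx⟩, sub_add_cancel y m⟩
    rcases hX₂ hp with h | h
    · exact hnb h.1
    · have hCm := hC (y - m)
      have : y - (y - m) = m := by abel
      rw [this] at hCm
      obtain ⟨_, hlt⟩ := h
      rw [hp1, hp2] at hlt
      omega
end

section
/- For every positive integer k, every function u: ℤ^k → ℤ admits a moderation, i.e., there exists a function v: ℤ^k → ℤ such that for each x₀ ∈ ℤ^k the function x ↦ u(x) + v(x₀ − x) is bounded above on ℤ^k. -/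
/-- Every function `u : ℤ^k → ℤ` (for `k > 0`) admits a moderation `v`,
i.e., a function such that for each `x₀ ∈ ℤ^k` the function `x ↦ u(x) + v(x₀ - x)`
is bounded above on `ℤ^k`. -/
theorem moderation_exists (k : ℕ) (hk : 0 < k) (u : (Fin k → ℤ) → ℤ) :
    ∃ v : (Fin k → ℤ) → ℤ,
      ∀ x₀ : Fin k → ℤ, ∃ m : ℤ, ∀ x : Fin k → ℤ, u x + v (x₀ - x) ≤ m := by
  classical
  -- sup norm
  set N : (Fin k → ℤ) → ℕ := fun x => Finset.univ.sup fun i => (x i).natAbs with hN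
  -- box of radius n
  set Box : ℕ → Finset (Fin k → ℤ) :=
    fun n => Fintype.piFinset fun _ => Finset.Icc (-(n : ℤ)) n with hBox
  -- max of u over the box (truncated at 0)
  set M : ℕ → ℕ := fun n => (Box n).sup fun x => (u x).toNat with hM
  have hmemBox : ∀ (x : Fin k → ℤ) (n : ℕ), N x ≤ n → x ∈ Box n := by
    intro x n h
    simp only [hBox, Fintype.mem_piFinset, Finset.mem_Icc]
    intro i
    have h1 : (x i).natAbs ≤ N x :=
      Finset.le_sup (f := fun i => (x i).natAbs) (Finset.mem_univ i)
    omega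
  have huM : ∀ (x : Fin k → ℤ) (n : ℕ), N x ≤ n → u x ≤ (M n : ℤ) := by
    intro x n h
    have h2 : (u x).toNat ≤ M n :=
      Finset.le_sup (f := fun x => (u x).toNat) (hmemBox x n h)
    omega
  have hNsub : ∀ x₀ x : Fin k → ℤ, N x ≤ N x₀ + N (x₀ - x) := by
    intro x₀ x
    apply Finset.sup_le
    intro i _
    have h1 : (x₀ i).natAbs ≤ N x₀ :=
      Finset.le_sup (f := fun i => (x₀ i).natAbs) (Finset.mem_univ i)
    have h2 : ((x₀ - x) i).natAbs ≤ N (x₀ - x) :=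
      Finset.le_sup (f := fun i => ((x₀ - x) i).natAbs) (Finset.mem_univ i)
    have h3 : (x₀ - x) i = x₀ i - x i := rfl
    rw [h3] at h2
    omega
  refine ⟨fun y => -(M (2 * N y) : ℤ), fun x₀ => ⟨(M (2 * N x₀) : ℤ), fun x => ?_⟩⟩
  set r := N (x₀ - x) with hr
  show u x + -(M (2 * r) : ℤ) ≤ (M (2 * N x₀) : ℤ)
  have hsub := hNsub x₀ x
  rcases le_or_gt (N x₀) r with hc | hc
  · have h1 : u x ≤ (M (2 * r) : ℤ) := huM x (2 * r) (by omega)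
    have h2 : (0 : ℤ) ≤ (M (2 * N x₀) : ℤ) := Int.ofNat_nonneg _
    omega
  · have h1 : u x ≤ (M (2 * N x₀) : ℤ) := huM x (2 * N x₀) (by omega)
    have h2 : (0 : ℤ) ≤ (M (2 * r) : ℤ) := Int.ofNat_nonneg _
    omega
end

section
/- Let k be a positive integer and u: ℤ^k → ℤ a function. Let ℬ be a subset of ℤ^k admitting a minimal complement M in ℤ^k. Then u admits a moderation, and for every moderation v of u, the set M_v := {(x, v(x)) : x ∈ M} ⊆ ℤ^{k+1} is a minimal complement in ℤ^{k+1} of every subset X of ℤ^{k+1} satisfying ℬ × ℤ ⊆ X ⊆ (ℬ × ℤ) ∪ ⋃_{x ∈ ℤ^k \ ℬ} ({x} × {m ∈ ℤ : m < u(x)}). -/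
open Pointwise

private lemma moderation_exists_s11 (k : ℕ) (u : (Fin k → ℤ) → ℤ) :
    ∃ v : (Fin k → ℤ) → ℤ, IsModeration u v := by
  classical
  set N : (Fin k → ℤ) → ℕ := fun y => Finset.univ.sup fun i => (y i).natAbs with hN
  set B : ℕ → Finset (Fin k → ℤ) := fun n => Fintype.piFinset fun _ => Finset.Icc (-(n:ℤ)) (n:ℤ) with hB
  have hBne : ∀ n, (B n).Nonempty := by
    intro n
    refine ⟨0, ?_⟩
    simp [hB, Fintype.mem_piFinset]
  have hmemB : ∀ (n : ℕ) (z : Fin k → ℤ), (∀ i, (z i).natAbs ≤ n) → z ∈ B n := by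
    intro n z h
    simp only [hB, Fintype.mem_piFinset, Finset.mem_Icc]
    intro i
    have := h i
    omega
  have hNle : ∀ (z : Fin k → ℤ) (i : Fin k), (z i).natAbs ≤ N z := fun z i =>
    Finset.le_sup (f := fun i => (z i).natAbs) (Finset.mem_univ i)
  refine ⟨fun y => -((B (2 * N y)).sup' (hBne _) u), ?_⟩
  intro x₀
  refine ⟨((B (N x₀)).sup' (hBne _) fun y => u (x₀ - y) + -((B (2 * N y)).sup' (hBne _) u)) ⊔ 0, ?_⟩
  intro x
  set y := x₀ - x with hy
  have hx : x = x₀ - y := by simp [hy]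
  by_cases hc : N y ≤ N x₀
  · have hymem : y ∈ B (N x₀) := by
      apply hmemB
      intro i
      calc (y i).natAbs ≤ N y := hNle y i
        _ ≤ N x₀ := hc
    have := Finset.le_sup' (fun y => u (x₀ - y) + -((B (2 * N y)).sup' (hBne _) u)) hymem
    rw [hx]
    exact le_trans this (le_max_left _ _)
  · push_neg at hc
    have hxmem : x ∈ B (2 * N y) := by
      apply hmemB
      intro i
      have h1 : (x i).natAbs ≤ (x₀ i).natAbs + (y i).natAbs := by
        have : x i = x₀ i - y i := by rw [hx]; simp
        rw [this]; exact Int.natAbs_sub_le _ _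
      have h2 : (x₀ i).natAbs ≤ N x₀ := hNle x₀ i
      have h3 : (y i).natAbs ≤ N y := hNle y i
      omega
    have := Finset.le_sup' u hxmem
    have : u x + -((B (2 * N y)).sup' (hBne _) u) ≤ 0 := by linarith
    exact le_trans this (le_max_right _ _)

/-- For any `u : ℤ^k → ℤ` and any `ℬ ⊆ ℤ^k` with minimal complement `M`,
`u` admits a moderation, and for every moderation `v` of `u` the graph
`M_v = {(x, v(x)) : x ∈ M}` is a minimal complement in `ℤ^{k+1}` of every `X` with
`ℬ × ℤ ⊆ X ⊆ (ℬ × ℤ) ∪ ⋃_{x ∉ ℬ} {x} × (-∞, u(x))`. -/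
theorem moderation_exists_and_graph_minimal_complement
    (k : ℕ) (hk : 0 < k) (u : (Fin k → ℤ) → ℤ)
    (ℬ : Set (Fin k → ℤ)) (M : Set (Fin k → ℤ))
    (hM : IsMinimalComplement ℬ M) :
    (∃ v : (Fin k → ℤ) → ℤ, IsModeration u v) ∧
    ∀ v : (Fin k → ℤ) → ℤ, IsModeration u v →
      ∀ X : Set ((Fin k → ℤ) × ℤ),
        ℬ ×ˢ (Set.univ : Set ℤ) ⊆ X →
        X ⊆ (ℬ ×ˢ (Set.univ : Set ℤ)) ∪
          {p : (Fin k → ℤ) × ℤ | p.1 ∉ ℬ ∧ p.2 < u p.1} →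
        IsMinimalComplement X {p : (Fin k → ℤ) × ℤ | ∃ x ∈ M, p = (x, v x)} := by
  refine ⟨moderation_exists_s11 k u, ?_⟩
  intro v hv X hX1 hX2
  obtain ⟨hMc, hMmin⟩ := hM
  constructor
  · ext p
    simp only [Set.mem_univ, iff_true]
    have hp1 : p.1 ∈ ℬ + M := by rw [hMc]; trivial
    obtain ⟨β, hβ, m, hm, hβm⟩ := hp1
    refine Set.mem_add.2 ⟨(β, p.2 - v m), hX1 ⟨hβ, trivial⟩, (m, v m), ⟨m, hm, rfl⟩, ?_⟩
    ext <;> simp [hβm]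
  · rintro p ⟨m, hmM, rfl⟩ hcontra
    have hne := hMmin m hmM
    have hex : ∃ a, a ∉ ℬ + (M \ {m}) := by
      by_contra h; push_neg at h; exact hne (Set.eq_univ_of_forall h)
    obtain ⟨a, ha⟩ := hex
    obtain ⟨C, hC⟩ := hv a
    have hmem : (a, C) ∈ X + ({p : (Fin k → ℤ) × ℤ | ∃ x ∈ M, p = (x, v x)} \ {(m, v m)}) := by
      rw [hcontra]; trivial
    obtain ⟨q, hq, r, ⟨⟨m', hm', rfl⟩, hr2⟩, hsum⟩ := Set.mem_add.1 hmem
    have hm'ne : m' ≠ m := by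
      intro h; subst h; exact hr2 rfl
    have hq1 : q.1 = a - m' := by
      have := congrArg Prod.fst hsum; simp at this; linear_combination (norm := abel) this - (0:Fin k → ℤ)
    have hq2 : q.2 = C - v m' := by
      have := congrArg Prod.snd hsum; simp at this; omega
    have hnb : q.1 ∉ ℬ := by
      intro hb
      exact ha (Set.mem_add.2 ⟨q.1, hb, m', ⟨hm', hm'ne⟩, by rw [hq1]; abel⟩)
    rcases hX2 hq with h1 | h2
    · exact hnb h1.1
    · have hb := hC (a - m')
      rw [sub_sub_cancel] at hb
      have := h2.2
      rw [hq1, hq2] at this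
      omega
end

section
/- Let W := {(x,y) ∈ ℤ² : y < x²} ∪ ({0} × ℤ). Then the set M := {(t, −2t²) : t ∈ ℤ} is a minimal complement of W in ℤ². -/
open Pointwise

/-- The set `M = {(t, -2t²) : t ∈ ℤ}` is a minimal complement in `ℤ²` of
`W = {(x,y) : y < x²} ∪ ({0} × ℤ)`. -/
theorem parabola_spiked_minimal_complement :
    IsMinimalComplement
      ({p : ℤ × ℤ | p.2 < p.1 ^ 2} ∪ {p : ℤ × ℤ | p.1 = 0})
      {p : ℤ × ℤ | ∃ t : ℤ, p = (t, -2 * t ^ 2)} := by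
  constructor
  · ext ⟨a, b⟩
    simp only [Set.mem_univ, iff_true, Set.mem_add]
    refine ⟨(0, b + 2 * a ^ 2), Or.inr rfl, (a, -2 * a ^ 2), ⟨a, rfl⟩, ?_⟩
    simp [Prod.ext_iff]
  · rintro m ⟨t₀, rfl⟩ h
    have : ((t₀, 2 * t₀ ^ 2) : ℤ × ℤ) ∈
        ({p : ℤ × ℤ | p.2 < p.1 ^ 2} ∪ {p : ℤ × ℤ | p.1 = 0}) +
        ({p : ℤ × ℤ | ∃ t : ℤ, p = (t, -2 * t ^ 2)} \ {(t₀, -2 * t₀ ^ 2)}) := by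
      rw [h]; trivial
    rw [Set.mem_add] at this
    obtain ⟨w, hw, m', ⟨⟨t, rfl⟩, hne⟩, heq⟩ := this
    have hw1 : w.1 = t₀ - t := by
      have := congrArg Prod.fst heq; simp at this; omega
    have hw2 : w.2 = 2 * t₀ ^ 2 + 2 * t ^ 2 := by
      have := congrArg Prod.snd heq; simp at this; linarith
    have htne : t ≠ t₀ := by
      intro hh; subst hh; exact hne rfl
    rcases hw with hw | hw
    · simp only [Set.mem_setOf_eq, hw1, hw2] at hw
      nlinarith [sq_nonneg (t₀ + t)]
    · simp only [Set.mem_setOf_eq, hw1] at hw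
      omega
end

section
/- Let n be a positive integer and W := {(x₁,…,xₙ,x_{n+1}) ∈ ℤ^{n+1} : x_{n+1} < x₁² + ⋯ + xₙ²} ∪ ({(0,…,0)} × ℤ). Then the set M := {(s₁,…,sₙ, −2(s₁² + ⋯ + sₙ²)) : (s₁,…,sₙ) ∈ ℤⁿ} is a minimal complement of W in ℤ^{n+1}. More generally, for any nonempty finite subset A of ℤⁿ, the set {(x₁,…,xₙ,x_{n+1}) ∈ ℤ^{n+1} : x_{n+1} < x₁² + ⋯ + xₙ²} ∪ (A × ℤ) admits a minimal complement in ℤ^{n+1}. -/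
open Pointwise

/-- Any nonempty finite subset of an abelian group admits a minimal complement. -/
lemma exists_min_complement {G : Type*} [AddCommGroup G] {A : Set G}
    (hA : A.Nonempty) (hAf : A.Finite) :
    ∃ S : Set G, A + S = Set.univ ∧ ∀ t ∈ S, A + (S \ {t}) ≠ Set.univ := by
  obtain ⟨a₀, ha₀⟩ := hA
  set 𝒞 : Set (Set G) := {S | A + S = Set.univ} with h𝒞
  have huniv : (Set.univ : Set G) ∈ 𝒞 := by
    apply Set.eq_univ_of_forall
    intro g
    exact Set.mem_add.2 ⟨a₀, ha₀, g - a₀, trivial, by abel⟩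
  have hzorn : ∀ c ⊆ 𝒞, IsChain (fun x1 x2 => x1 ⊆ x2) c → ∃ lb ∈ 𝒞, ∀ s ∈ c, lb ⊆ s := by
    intro c hc hchain
    rcases c.eq_empty_or_nonempty with rfl | ⟨S₁, hS₁⟩
    · exact ⟨Set.univ, huniv, by simp⟩
    refine ⟨⋂₀ c, ?_, fun s hs => Set.sInter_subset_of_mem hs⟩
    apply Set.eq_univ_of_forall
    intro g
    -- the finite set of candidate complements of g
    set F : Set G := (fun a => g - a) '' A with hF
    have hFfin : F.Finite := hAf.image _
    have key : ∀ S ∈ c, (S ∩ F).Nonempty := by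
      intro S hSc
      have hgS : g ∈ A + S := (hc hSc) ▸ trivial
      obtain ⟨a, ha, s, hsS, hsum⟩ := Set.mem_add.1 hgS
      exact ⟨s, hsS, ⟨a, ha, by rw [← hsum]; exact add_sub_cancel_left a s⟩⟩
    set D : Set (Set G) := (fun S => S ∩ F) '' c with hD
    have hDfin : D.Finite := by
      apply hFfin.finite_subsets.subset
      rintro _ ⟨S, _, rfl⟩
      exact Set.inter_subset_right
    have hDne : D.Nonempty := ⟨S₁ ∩ F, S₁, hS₁, rfl⟩
    obtain ⟨T₀, hT₀D, hT₀min⟩ := hDfin.exists_maximalFor (OrderDual.toDual) D hDne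
    obtain ⟨S₀, hS₀c, rfl⟩ := hT₀D
    have hmin : ∀ S ∈ c, S₀ ∩ F ⊆ S ∩ F := by
      intro S hSc
      rcases eq_or_ne S S₀ with rfl | hne
      · exact subset_rfl
      rcases hchain hSc hS₀c hne with h | h
      · have heq := hT₀min (j := S ∩ F) ⟨S, hSc, rfl⟩
          (OrderDual.toDual_le_toDual.2 (Set.inter_subset_inter_left F h))
        exact OrderDual.toDual_le_toDual.1 heq
      · exact Set.inter_subset_inter_left F h
    obtain ⟨s₀, hs₀S₀, hs₀F⟩ := key S₀ hS₀c
    obtain ⟨a, haA, hga⟩ := hs₀F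
    have hs₀ : s₀ ∈ ⋂₀ c := by
      intro S hSc
      exact (hmin S hSc ⟨hs₀S₀, ⟨a, haA, hga⟩⟩).1
    exact Set.mem_add.2 ⟨a, haA, s₀, hs₀, by simp only [← hga]; exact add_sub_cancel _ _⟩
  obtain ⟨S, hS⟩ := zorn_superset 𝒞 hzorn
  refine ⟨S, hS.1, fun t ht hcon => ?_⟩
  have hsub : S ⊆ S \ {t} := hS.2 hcon (Set.diff_subset)
  exact (hsub ht).2 rfl

lemma sum_sq_ineq (n : ℕ) (y s : Fin n → ℤ) :
    ∑ i, (y i - s i) ^ 2 ≤ 2 * ∑ i, (y i) ^ 2 + 2 * ∑ i, (s i) ^ 2 := by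
  rw [Finset.mul_sum, Finset.mul_sum, ← Finset.sum_add_distrib]
  apply Finset.sum_le_sum
  intro i _
  nlinarith [sq_nonneg (y i + s i)]

/-- The graph of `s ↦ -2‖s‖²` over a minimal complement `S` of `A` in `ℤⁿ` is a
minimal complement of the spiked paraboloid. -/
lemma graph_minimal (n : ℕ) {A S : Set (Fin n → ℤ)}
    (h1 : A + S = Set.univ) (h2 : ∀ t ∈ S, A + (S \ {t}) ≠ Set.univ) :
    IsMinimalComplement
      ({p : (Fin n → ℤ) × ℤ | p.2 < ∑ i, (p.1 i) ^ 2} ∪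
        {p : (Fin n → ℤ) × ℤ | p.1 ∈ A})
      {p : (Fin n → ℤ) × ℤ | ∃ s ∈ S, p = (s, -2 * ∑ i, (s i) ^ 2)} := by
  constructor
  · apply Set.eq_univ_of_forall
    rintro ⟨y, z⟩
    have hy : y ∈ A + S := h1 ▸ trivial
    obtain ⟨a, ha, s, hsS, hsum⟩ := Set.mem_add.1 hy
    refine Set.mem_add.2 ⟨(a, z + 2 * ∑ i, (s i) ^ 2), Or.inr ha,
      (s, -2 * ∑ i, (s i) ^ 2), ⟨s, hsS, rfl⟩, ?_⟩
    rw [Prod.mk_add_mk, hsum]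
    congr 1
    ring
  · rintro m ⟨t, htS, rfl⟩ hcon
    obtain ⟨y₀, hy₀⟩ : ∃ y₀, y₀ ∉ A + (S \ {t}) := by
      by_contra h
      push_neg at h
      exact h2 t htS (Set.eq_univ_of_forall h)
    have hp : ((y₀, 2 * ∑ i, (y₀ i) ^ 2) : (Fin n → ℤ) × ℤ) ∈ _ := hcon ▸
      (Set.mem_univ ((y₀, 2 * ∑ i, (y₀ i) ^ 2) : (Fin n → ℤ) × ℤ))
    obtain ⟨w, hw, m', ⟨⟨s, hsS, rfl⟩, hmne⟩, hsum⟩ := Set.mem_add.1 hp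
    have hst : s ≠ t := by
      rintro rfl
      exact hmne rfl
    have hw1 : w.1 = y₀ - s := by
      have := congrArg Prod.fst hsum
      simp at this
      exact (eq_sub_of_add_eq this).symm ▸ rfl
    have hw2 : w.2 = 2 * ∑ i, (y₀ i) ^ 2 + 2 * ∑ i, (s i) ^ 2 := by
      have := congrArg Prod.snd hsum
      simp at this
      linarith
    rcases hw with hw | hw
    · simp only [Set.mem_setOf_eq, hw1, hw2] at hw
      have hle := sum_sq_ineq n y₀ s
      have : ∑ i, ((y₀ - s) i) ^ 2 = ∑ i, (y₀ i - s i) ^ 2 := by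
        apply Finset.sum_congr rfl; intro i _; simp
      omega
    · simp only [Set.mem_setOf_eq, hw1] at hw
      apply hy₀
      exact Set.mem_add.2 ⟨y₀ - s, hw, s, ⟨hsS, hst⟩, by abel⟩

/-- For `n > 0`, the set `M = {(s, -2·‖s‖²) : s ∈ ℤⁿ}` is a minimal
complement in `ℤ^{n+1}` of `W = {(x, z) : z < ‖x‖²} ∪ ({0} × ℤ)`; moreover, for any
nonempty finite `A ⊆ ℤⁿ`, the set `{(x, z) : z < ‖x‖²} ∪ (A × ℤ)` admits a minimal
complement in `ℤ^{n+1}`. -/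
theorem paraboloid_spiked_minimal_complement (n : ℕ) (hn : 0 < n) :
    IsMinimalComplement
      ({p : (Fin n → ℤ) × ℤ | p.2 < ∑ i, (p.1 i) ^ 2} ∪
        {p : (Fin n → ℤ) × ℤ | p.1 = 0})
      {p : (Fin n → ℤ) × ℤ | ∃ s : Fin n → ℤ, p = (s, -2 * ∑ i, (s i) ^ 2)} ∧
    ∀ A : Set (Fin n → ℤ), A.Nonempty → A.Finite →
      ∃ M : Set ((Fin n → ℤ) × ℤ),
        IsMinimalComplement
          ({p : (Fin n → ℤ) × ℤ | p.2 < ∑ i, (p.1 i) ^ 2} ∪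
            {p : (Fin n → ℤ) × ℤ | p.1 ∈ A}) M := by
  constructor
  · have h1 : ({0} : Set (Fin n → ℤ)) + Set.univ = Set.univ := by
      apply Set.eq_univ_of_forall
      intro g
      exact Set.mem_add.2 ⟨0, rfl, g, trivial, by abel⟩
    have h2 : ∀ t ∈ (Set.univ : Set (Fin n → ℤ)),
        ({0} : Set (Fin n → ℤ)) + (Set.univ \ {t}) ≠ Set.univ := by
      intro t _ hcon
      have ht : t ∈ ({0} : Set (Fin n → ℤ)) + (Set.univ \ {t}) := by rw [hcon]; trivial
      obtain ⟨a, ha, s, ⟨_, hst⟩, hsum⟩ := Set.mem_add.1 ht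
      rw [Set.mem_singleton_iff] at ha
      apply hst
      rw [Set.mem_singleton_iff]
      rw [ha, zero_add] at hsum
      exact hsum
    have key := graph_minimal n h1 h2
    have e1 : {p : (Fin n → ℤ) × ℤ | p.1 = 0} =
        {p : (Fin n → ℤ) × ℤ | p.1 ∈ ({0} : Set (Fin n → ℤ))} := by
      ext p; simp
    have e2 : {p : (Fin n → ℤ) × ℤ | ∃ s : Fin n → ℤ, p = (s, -2 * ∑ i, (s i) ^ 2)} =
        {p : (Fin n → ℤ) × ℤ | ∃ s ∈ (Set.univ : Set (Fin n → ℤ)),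
          p = (s, -2 * ∑ i, (s i) ^ 2)} := by
      ext p; simp
    rw [e1, e2]
    exact key
  · intro A hA hAf
    obtain ⟨S, h1, h2⟩ := exists_min_complement hA hAf
    exact ⟨_, graph_minimal n h1 h2⟩
end

section
/- Let F₁ be a finitely generated abelian group and F₂ a free abelian group of finite positive rank r, with an isomorphism φ: F₂ ≅ ℤ^r. Then: (i) every function u: F₁ → F₂ admits a φ-moderation v: F₁ → F₂; (ii) for every subgroup F₂' of F₂ of finite index, every function u: F₁ → F₂ admits a φ-moderation v': F₁ → F₂ whose values all lie in F₂'. -/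
/-- Auxiliary: in a finitely generated abelian group, for any `f : F₁ → ℤ` and `n > 0`
there is `g : F₁ → ℤ` with, for each `x₀`, the family `n * g x + f (x₀ - x)` bounded above. -/
theorem moderation_exists_int
    {F₁ : Type*} [AddCommGroup F₁] [AddGroup.FG F₁]
    (f : F₁ → ℤ) (n : ℕ) (hn : 0 < n) :
    ∃ g : F₁ → ℤ, ∀ x₀ : F₁, ∃ C : ℤ, ∀ x : F₁, (n : ℤ) * g x + f (x₀ - x) ≤ C := by
  classical
  have hfin : Module.Finite ℤ F₁ := Module.Finite.iff_addGroup_fg.mpr ‹_›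
  obtain ⟨N, ψ, hψ⟩ := Module.Finite.exists_fin' ℤ F₁
  have hcount : Countable F₁ := hψ.countable
  obtain ⟨e, he⟩ := exists_surjective_nat F₁
  -- length of an element: least index in the enumeration
  let ℓ : F₁ → ℕ := fun x => Nat.find (he x)
  have heℓ : ∀ x, e (ℓ x) = x := fun x => Nat.find_spec (he x)
  -- g x = - max(0, max over i ≤ ℓ x of f (e i - x))
  let g : F₁ → ℤ := fun x =>
    -max 0 ((Finset.range (ℓ x + 1)).sup' (by simp) fun i => f (e i - x))
  have hg0 : ∀ x, g x ≤ 0 := fun x => by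
    simp only [g, neg_nonpos]; exact le_max_left _ _
  have hgle : ∀ x (i : ℕ), i ≤ ℓ x → g x ≤ -f (e i - x) := by
    intro x i hi
    simp only [g, neg_le_neg_iff]
    exact le_trans (Finset.le_sup' (f := fun i => f (e i - x))
      (Finset.mem_range.mpr (Nat.lt_succ_of_le hi)))
      (le_max_right _ _)
  refine ⟨g, fun x₀ => ?_⟩
  refine ⟨(insert 0 ((Finset.range (ℓ x₀)).image
      fun i => (n : ℤ) * g (e i) + f (x₀ - e i))).max' (by simp), fun x => ?_⟩
  have hng : (n : ℤ) * g x ≤ g x := by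
    have h1 : (1 : ℤ) ≤ (n : ℤ) := by exact_mod_cast hn
    nlinarith [hg0 x]
  rcases le_or_gt (ℓ x₀) (ℓ x) with h | h
  · -- then f (x₀ - x) ≤ - g x
    have := hgle x (ℓ x₀) h
    rw [heℓ x₀] at this
    have h0 : (n : ℤ) * g x + f (x₀ - x) ≤ 0 := by linarith
    exact le_trans h0 (Finset.le_max' _ 0 (Finset.mem_insert_self _ _))
  · -- x = e (ℓ x) with ℓ x < ℓ x₀, so the value is in the finite set
    refine Finset.le_max' _ _ (Finset.mem_insert_of_mem ?_)
    exact Finset.mem_image.mpr ⟨ℓ x, Finset.mem_range.mpr h, by rw [heℓ x]⟩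

/-- Let `F₁` be a finitely generated abelian group, `F₂` free abelian of
rank `r > 0` with an isomorphism `φ : F₂ ≃ ℤ^r` (lexicographic order on `ℤ^r`). Then:
(i) every `u : F₁ → F₂` admits a `φ`-moderation;
(ii) for every finite index subgroup `F₂'` of `F₂`, every `u : F₁ → F₂` admits a
`φ`-moderation with values in `F₂'`. -/
theorem moderation_exists_general
    {F₁ F₂ : Type*} [AddCommGroup F₁] [AddGroup.FG F₁] [AddCommGroup F₂]
    (r : ℕ) (hr : 0 < r) (φ : F₂ ≃+ (Fin r → ℤ)) :
    (∀ u : F₁ → F₂, ∃ v : F₁ → F₂,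
      ∀ x₀ : F₁, ∃ m : Lex (Fin r → ℤ),
        ∀ x : F₁, toLex (φ (v x + u (x₀ - x))) ≤ m) ∧
    (∀ F₂' : AddSubgroup F₂, F₂'.FiniteIndex → ∀ u : F₁ → F₂,
      ∃ v' : F₁ → F₂, (∀ x : F₁, v' x ∈ F₂') ∧
        ∀ x₀ : F₁, ∃ m : Lex (Fin r → ℤ),
          ∀ x : F₁, toLex (φ (v' x + u (x₀ - x))) ≤ m) := by
  -- it suffices to prove the subgroup version (taking `F₂' = ⊤` gives the first part)
  set i₀ : Fin r := ⟨0, hr⟩ with hi₀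
  -- general construction for `n > 0` with values `n • w`
  have key : ∀ (n : ℕ), 0 < n → ∀ u : F₁ → F₂,
      ∃ v : F₁ → F₂, (∀ x, ∃ w : F₂, v x = n • w) ∧
        ∀ x₀ : F₁, ∃ m : Lex (Fin r → ℤ),
          ∀ x : F₁, toLex (φ (v x + u (x₀ - x))) ≤ m := by
    intro n hn u
    obtain ⟨g, hg⟩ := moderation_exists_int (fun y => φ (u y) i₀) n hn
    refine ⟨fun x => n • φ.symm (Pi.single i₀ (g x)),
      fun x => ⟨φ.symm (Pi.single i₀ (g x)), rfl⟩, fun x₀ => ?_⟩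
    obtain ⟨C, hC⟩ := hg x₀
    refine ⟨toLex (Pi.single i₀ (C + 1)), fun x => ?_⟩
    have hcoord : φ (n • φ.symm (Pi.single i₀ (g x)) + u (x₀ - x)) i₀
        = (n : ℤ) * g x + φ (u (x₀ - x)) i₀ := by
      simp [Pi.single_apply, nsmul_eq_mul]
    apply le_of_lt
    refine ⟨i₀, fun j hj => absurd hj (by simp [hi₀, Fin.lt_def]), ?_⟩
    show φ (n • φ.symm (Pi.single i₀ (g x)) + u (x₀ - x)) i₀ < (Pi.single i₀ (C + 1) : Fin r → ℤ) i₀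
    rw [hcoord]
    have := hC x
    rw [Pi.single_eq_same]
    omega
  constructor
  · intro u
    obtain ⟨v, _, hv⟩ := key 1 one_pos u
    exact ⟨v, hv⟩
  · intro F₂' hF u
    obtain ⟨v, hmem, hv⟩ := key F₂'.index hF.index_ne_zero.bot_lt u
    refine ⟨v, fun x => ?_, hv⟩
    obtain ⟨w, hw⟩ := hmem x
    rw [hw]
    exact AddSubgroup.nsmul_index_mem F₂' w
end

section
/- Let F₁ be an abelian group, F₂ a free abelian group of finite positive rank r, φ: F₂ ≅ ℤ^r an isomorphism, u: F₁ → F₂ a function, and v: F₁ → F₂ a φ-moderation of u. Then for no x₀ ∈ F₁ does the sumset {(x, v(x)) : x ∈ F₁} + ⋃_{g₁ ∈ F₁} ({g₁} × φ⁻¹(ℤ^r_{<φ(u(g₁))})) (formed inside F₁ × F₂) contain {x₀} × F₂. -/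
open Pointwise

/-- If `v` is a `φ`-moderation of `u : F₁ → F₂` (with `φ : F₂ ≃ ℤ^r`, lex
order), then the sumset of the graph of `v` with the union of the truncated fibres
`⋃_{g₁} {g₁} × φ⁻¹(ℤ^r_{<φ(u(g₁))})` contains no full fibre `{x₀} × F₂`. -/
theorem graph_plus_truncated_misses_fibre
    {F₁ F₂ : Type*} [AddCommGroup F₁] [AddCommGroup F₂]
    (r : ℕ) (hr : 0 < r) (φ : F₂ ≃+ (Fin r → ℤ)) (u v : F₁ → F₂)
    (hv : ∀ x₀ : F₁, ∃ m : Lex (Fin r → ℤ),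
      ∀ x : F₁, toLex (φ (v x + u (x₀ - x))) ≤ m) :
    ∀ x₀ : F₁,
      ¬ (({x₀} : Set F₁) ×ˢ (Set.univ : Set F₂) ⊆
        {p : F₁ × F₂ | ∃ x : F₁, p = (x, v x)} +
        {p : F₁ × F₂ | toLex (φ p.2) < toLex (φ (u p.1))}) := by
  intro x₀ hsub
  obtain ⟨m, hm⟩ := hv x₀
  -- key claim : every y has toLex (φ y) < something ≤ m, apply to y := φ.symm (ofLex m)
  have key : ∀ y : F₂, toLex (φ y) < m := by
    intro y
    have hy : (x₀, y) ∈ {p : F₁ × F₂ | ∃ x : F₁, p = (x, v x)} +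
        {p : F₁ × F₂ | toLex (φ p.2) < toLex (φ (u p.1))} := by
      apply hsub
      exact ⟨rfl, Set.mem_univ _⟩
    obtain ⟨a, ha, b, hb, hab⟩ := hy
    obtain ⟨x, rfl⟩ := ha
    have h1 : x + b.1 = x₀ := congrArg Prod.fst hab
    have h2 : v x + b.2 = y := congrArg Prod.snd hab
    have hb1 : b.1 = x₀ - x := by rw [← h1]; abel
    have : toLex (φ y) < toLex (φ (v x + u (x₀ - x))) := by
      rw [← h2, ← hb1]
      simp only [map_add]
      have hblt : toLex (φ b.2) < toLex (φ (u b.1)) := hb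
      calc toLex (φ (v x) + φ b.2) = toLex (φ (v x)) + toLex (φ b.2) := rfl
        _ < toLex (φ (v x)) + toLex (φ (u b.1)) := add_lt_add_right hblt _
        _ = toLex (φ (v x) + φ (u b.1)) := rfl
    exact lt_of_lt_of_le this (hm x)
  have := key (φ.symm (ofLex m))
  simp at this
  exact lt_irrefl _ this
end
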